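/- Let q > 2 and let f : ℝ → ℝ be continuous with the property that t ↦ f(t)/|t|^{q−1} is increasing on (0,∞) and increasing on (−∞,0), and set F(u) := ∫_0^u f(s) ds. Then f(u)u ≥ q F(u) for every u ∈ ℝ. -/
import Mathlib

set_option maxRecDepth 4000
open MeasureTheory intervalIntegral

lemma helper_pos (q : ℝ) (hq : 2 < q) (f : ℝ → ℝ) (hf : Continuous f)
    (hmono : StrictMonoOn (fun t : ℝ => f t / |t| ^ (q - 1)) (Set.Ioi 0))
    (u : ℝ) (hu : 0 < u) : q * (∫ s in (0:ℝ)..u, f s) ≤ f u * u := by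
  have hq1 : (0:ℝ) < q - 1 := by linarith
  have hq0 : (0:ℝ) < q := by linarith
  set c : ℝ := f u / u ^ (q - 1) with hc
  have hupos : (0:ℝ) < u ^ (q - 1) := Real.rpow_pos_of_pos hu _
  have key : ∀ s ∈ Set.Ioc (0:ℝ) u, f s ≤ c * s ^ (q - 1) := by
    intro s hs
    have hs0 : (0:ℝ) < s := hs.1
    have h := hmono.monotoneOn (Set.mem_Ioi.2 hs0) (Set.mem_Ioi.2 hu) hs.2
    simp only [abs_of_pos hs0, abs_of_pos hu] at h
    have hspos : (0:ℝ) < s ^ (q - 1) := Real.rpow_pos_of_pos hs0 _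
    rw [div_le_div_iff₀ hspos hupos] at h
    rw [hc, div_mul_eq_mul_div, le_div_iff₀ hupos]
    linarith
  have hcont : Continuous (fun s : ℝ => c * s ^ (q - 1)) :=
    continuous_const.mul (Real.continuous_rpow_const hq1.le)
  have h1 : (∫ s in (0:ℝ)..u, f s) ≤ ∫ s in (0:ℝ)..u, c * s ^ (q - 1) := by
    rw [integral_of_le hu.le, integral_of_le hu.le]
    exact setIntegral_mono_on (hf.integrableOn_Ioc) (hcont.integrableOn_Ioc)
      measurableSet_Ioc key
  have h2 : (∫ s in (0:ℝ)..u, c * s ^ (q - 1)) = f u * u / q := by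
    rw [intervalIntegral.integral_const_mul, integral_rpow (Or.inl (by linarith))]
    have : q - 1 + 1 = q := by ring
    rw [this, Real.zero_rpow hq0.ne']
    rw [hc]
    rw [show u ^ q = u ^ (q - 1) * u by
      rw [← Real.rpow_add_one hu.ne' (q-1)]; ring_nf]
    field_simp
    ring
  calc q * (∫ s in (0:ℝ)..u, f s) ≤ q * (f u * u / q) := by
        rw [← h2]; exact mul_le_mul_of_nonneg_left h1 hq0.le
    _ = f u * u := by field_simp

/-- If `q > 2`, `f : ℝ → ℝ` is continuous and `t ↦ f(t)/|t|^{q−1}` is increasing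
on `(0,∞)` and on `(−∞,0)`, then `f(u)u ≥ q F(u)` for all `u`, where
`F(u) = ∫_0^u f(s) ds`. -/
theorem mono_implies_qF_le
    (q : ℝ) (hq : 2 < q) (f : ℝ → ℝ) (hf : Continuous f)
    (hmono_pos : StrictMonoOn (fun t : ℝ => f t / |t| ^ (q - 1)) (Set.Ioi 0))
    (hmono_neg : StrictMonoOn (fun t : ℝ => f t / |t| ^ (q - 1)) (Set.Iio 0)) :
    ∀ u : ℝ, q * (∫ s in (0:ℝ)..u, f s) ≤ f u * u := by
  intro u
  rcases lt_trichotomy u 0 with hu | hu | hu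
  · -- apply helper_pos to g t = -f (-t) at -u
    set g : ℝ → ℝ := fun t => -f (-t) with hg
    have hgc : Continuous g := (hf.comp continuous_neg).neg
    have hgm : StrictMonoOn (fun t : ℝ => g t / |t| ^ (q - 1)) (Set.Ioi 0) := by
      intro a ha b hb hab
      have ha0 : (0:ℝ) < a := ha
      have hb0 : (0:ℝ) < b := hb
      have key := hmono_neg (Set.mem_Iio.2 (neg_neg_of_pos hb0))
        (Set.mem_Iio.2 (neg_neg_of_pos ha0)) (by linarith : -b < -a)
      simp only [abs_neg] at key
      have hpa : (0:ℝ) < |a| ^ (q - 1) := Real.rpow_pos_of_pos (abs_pos.2 ha0.ne') _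
      have hpb : (0:ℝ) < |b| ^ (q - 1) := Real.rpow_pos_of_pos (abs_pos.2 hb0.ne') _
      simp only [hg]
      rw [div_lt_div_iff₀ hpa hpb]
      rw [div_lt_div_iff₀ hpb hpa] at key
      nlinarith [key]
    have h := helper_pos q hq g hgc hgm (-u) (by linarith)
    have hInt : (∫ s in (0:ℝ)..(-u), g s) = ∫ s in (0:ℝ)..u, f s := by
      simp only [hg]
      rw [intervalIntegral.integral_neg, integral_comp_neg (f := f)]
      simp only [neg_neg, neg_zero]
      rw [intervalIntegral.integral_symm 0 u, neg_neg]
    rw [hInt] at h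
    have : g (-u) * (-u) = f u * u := by simp only [hg, neg_neg]; ring
    linarith [this ▸ h]
  · simp [hu]
  · exact helper_pos q hq f hf hmono_pos u hu
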